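/- arXiv:1008.2682 — 2 statements merged into one kernel-verified Lean document; each statement's English description precedes it below -/
import Mathlib

section
/- Let A be a self-adjoint operator on a separable complex Hilbert space H, let c ≥ 0, and let ψ ∈ H. For t > 0 and y ∈ ℝ define ψ(t,y) := f(t,A,y)ψ where f(t,x,y) = exp(yx − (1+c)tx²) via the functional calculus. Then for every t > 0, E‖ψ(t, ξ_t)‖² = ∫ exp(−2ctx²) dμ_ψ(x) ≤ ‖ψ‖², where ξ_t is a standard Brownian motion and μ_ψ is the spectral measure of A associated with ψ. In particular, if c = 0 then E‖ψ(t,ξ_t)‖² = ‖ψ‖². -/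
open MeasureTheory ProbabilityTheory Real
open scoped NNReal

/-!
By the functional calculus, `E‖ψ(t, ξ_t)‖² = E ∫ e^{2ξ_t x − 2(1+c)tx²} dμ_ψ(x)`. Swapping the
expectation with the spectral integral, the Gaussian moment generating function
`E e^{2xξ_t} = e^{2tx²}` cancels the `t`-part of the exponent and leaves `∫ e^{−2ctx²} dμ_ψ`,
which is at most `μ_ψ(ℝ) = ‖ψ‖²` since the integrand is at most `1`.
-/

lemma integral_exp_mul_gaussianReal (v : ℝ≥0) (b : ℝ) :
    ∫ y, rexp (b * y) ∂gaussianReal 0 v = rexp (v * b ^ 2 / 2) := by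
  simpa [mgf] using congrFun (mgf_fun_id_gaussianReal (μ := 0) (v := v)) b

lemma sq_exp_sub_mul_sq (x y a : ℝ) :
    rexp (y * x - a * x ^ 2) ^ 2 = rexp (-(2 * a * x ^ 2)) * rexp (2 * x * y) := by
  rw [← exp_add, sq, ← exp_add]
  ring_nf

lemma integrable_sq_exp_sub_mul_sq_gaussianReal (v : ℝ≥0) (x a : ℝ) :
    Integrable (fun y ↦ rexp (y * x - a * x ^ 2) ^ 2) (gaussianReal 0 v) := by
  simp_rw [sq_exp_sub_mul_sq]
  exact (integrable_exp_mul_gaussianReal _).const_mul _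

lemma integral_sq_exp_sub_mul_sq_gaussianReal (v : ℝ≥0) (x a : ℝ) :
    ∫ y, rexp (y * x - a * x ^ 2) ^ 2 ∂gaussianReal 0 v = rexp (-(2 * (a - v) * x ^ 2)) := by
  simp_rw [sq_exp_sub_mul_sq, integral_const_mul, integral_exp_mul_gaussianReal, ← exp_add]
  ring_nf

lemma exp_neg_mul_sq_le_one {s : ℝ} (hs : 0 ≤ s) (x : ℝ) : rexp (-(s * x ^ 2)) ≤ 1 :=
  exp_le_one_iff.mpr (neg_nonpos.mpr (by positivity))

section FiniteMeasure

variable {μ : Measure ℝ} [IsFiniteMeasure μ] {s : ℝ}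

lemma integrable_exp_neg_mul_sq_of_isFiniteMeasure (hs : 0 ≤ s) :
    Integrable (fun x ↦ rexp (-(s * x ^ 2))) μ := by
  refine (integrable_const (1 : ℝ)).mono' (by fun_prop) (ae_of_all _ fun x ↦ ?_)
  rw [norm_of_nonneg (exp_nonneg _)]
  exact exp_neg_mul_sq_le_one hs x

lemma integral_exp_neg_mul_sq_le_measureReal_univ (hs : 0 ≤ s) :
    ∫ x, rexp (-(s * x ^ 2)) ∂μ ≤ μ.real Set.univ := by
  calc ∫ x, rexp (-(s * x ^ 2)) ∂μ ≤ ∫ _, (1 : ℝ) ∂μ :=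
        integral_mono_of_nonneg (ae_of_all _ fun _ ↦ exp_nonneg _) (integrable_const 1)
          (ae_of_all _ (exp_neg_mul_sq_le_one hs))
    _ = μ.real Set.univ := by simp

lemma integral_gaussianReal_integral_sq_exp_sub_mul_sq (v : ℝ≥0) {a : ℝ} (hva : v ≤ a) :
    ∫ y, ∫ x, rexp (y * x - a * x ^ 2) ^ 2 ∂μ ∂gaussianReal 0 v
      = ∫ x, rexp (-(2 * (a - v) * x ^ 2)) ∂μ := by
  have hint : Integrable (Function.uncurry fun x y ↦ rexp (y * x - a * x ^ 2) ^ 2)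
      (μ.prod (gaussianReal 0 v)) := by
    refine (integrable_prod_iff (by fun_prop)).mpr ⟨ae_of_all _ fun x ↦ ?_, ?_⟩
    · exact integrable_sq_exp_sub_mul_sq_gaussianReal v x a
    · simp_rw [Function.uncurry_apply_pair, norm_pow, norm_of_nonneg (exp_nonneg _),
        integral_sq_exp_sub_mul_sq_gaussianReal]
      exact integrable_exp_neg_mul_sq_of_isFiniteMeasure (by linarith)
  rw [← integral_integral_swap hint]
  simp_rw [integral_sq_exp_sub_mul_sq_gaussianReal]

end FiniteMeasure

/-- For a self-adjoint operator `A` with spectral measure `μψ` of `ψ`, `c ≥ 0`, and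
`Ψ t y = f(t,A,y)ψ` defined via functional calculus (so that
`‖Ψ t y‖² = ∫ exp(yx − (1+c)tx²)² dμψ(x)`), one has
`E‖Ψ(t, ξ_t)‖² = ∫ exp(−2ctx²) dμψ ≤ ‖ψ‖²`, with equality `= ‖ψ‖²` if `c = 0`. -/
theorem stochastic_flow_L2_contraction
    {H : Type*} [NormedAddCommGroup H] [InnerProductSpace ℂ H]
    {Ω : Type*} [MeasurableSpace Ω] (P : Measure Ω) [IsProbabilityMeasure P]
    (ξ : ℝ → Ω → ℝ)
    (hξ : ∀ t : ℝ, 0 < t → Measure.map (ξ t) P = gaussianReal 0 t.toNNReal)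
    (c : ℝ) (hc : 0 ≤ c) (ψ : H) (μψ : Measure ℝ) [IsFiniteMeasure μψ]
    (hμtot : μψ Set.univ = ENNReal.ofReal (‖ψ‖ ^ 2))
    (Ψ : ℝ → ℝ → H)
    (hcalc : ∀ t y : ℝ, 0 < t →
      ‖Ψ t y‖ ^ 2 = ∫ x, (Real.exp (y * x - (1 + c) * t * x ^ 2)) ^ 2 ∂μψ) :
    ∀ t : ℝ, 0 < t →
      (∫ ω, ‖Ψ t (ξ t ω)‖ ^ 2 ∂P = ∫ x, Real.exp (-(2 * c * t * x ^ 2)) ∂μψ) ∧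
      (∫ ω, ‖Ψ t (ξ t ω)‖ ^ 2 ∂P ≤ ‖ψ‖ ^ 2) ∧
      (c = 0 → ∫ ω, ‖Ψ t (ξ t ω)‖ ^ 2 ∂P = ‖ψ‖ ^ 2) := by
  intro t ht
  have hlaw : HasLaw (ξ t) (gaussianReal 0 t.toNNReal) P :=
    ⟨.of_map_ne_zero (hξ t ht ▸ IsProbabilityMeasure.ne_zero _), hξ t ht⟩
  have hvar : (t.toNNReal : ℝ) = t := coe_toNNReal t ht.le
  have hmass : μψ.real Set.univ = ‖ψ‖ ^ 2 := by
    rw [measureReal_def, hμtot, ENNReal.toReal_ofReal (by positivity)]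
  have hmean : ∫ ω, ‖Ψ t (ξ t ω)‖ ^ 2 ∂P = ∫ x, rexp (-(2 * c * t * x ^ 2)) ∂μψ := by
    have hG : StronglyMeasurable fun y ↦ ∫ x, rexp (y * x - (1 + c) * t * x ^ 2) ^ 2 ∂μψ :=
      (by fun_prop : Continuous fun p : ℝ × ℝ ↦ rexp (p.1 * p.2 - (1 + c) * t * p.2 ^ 2) ^ 2)
        |>.stronglyMeasurable.integral_prod_right'
    calc ∫ ω, ‖Ψ t (ξ t ω)‖ ^ 2 ∂P
        = ∫ y, ∫ x, rexp (y * x - (1 + c) * t * x ^ 2) ^ 2 ∂μψ ∂gaussianReal 0 t.toNNReal := by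
          simp_rw [hcalc t _ ht]
          exact hlaw.integral_comp hG.aestronglyMeasurable
      _ = ∫ x, rexp (-(2 * ((1 + c) * t - t) * x ^ 2)) ∂μψ := by
          rw [integral_gaussianReal_integral_sq_exp_sub_mul_sq _ (by nlinarith), hvar]
      _ = ∫ x, rexp (-(2 * c * t * x ^ 2)) ∂μψ := by ring_nf
  refine ⟨hmean, ?_, fun hc0 ↦ ?_⟩
  · rw [hmean, ← hmass]
    exact integral_exp_neg_mul_sq_le_measureReal_univ (by positivity)
  · simp [hmean, hc0, hmass]
end

section
/- Laplace-transform uniqueness step: let K* be a densely defined operator on a Hilbert space 𝔥 such that K* + c/2 is m-accretive, let 𝒟* be a core for K*, and let m : [0,∞) → 𝔥 be continuous with ⟨φ, m(t)⟩ = −∫₀ᵗ ⟨K*φ, m(s)⟩ ds for all φ ∈ 𝒟* and t ≥ 0. Then m ≡ 0. -/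
/-!
Fix `T > 0` and let `Φ z = ∫₀ᵀ e^{z (T - s)} m s ds`. Integrating the weak equation by parts
against `e^{λ (T - s)}` gives `⟪(K + λ) φ, Φ λ⟫ = -⟪φ, m T⟫` for `φ ∈ D`, so accretivity of
`K + c/2` and density of `(K + λ) D` give `‖Φ λ‖ ≤ ‖m T‖ / (λ - c/2) → 0` as `λ → ∞`.
The entire function `Φ` is bounded on the closed left half-plane and of exponential type, so by
Phragmén–Lindelöf it is bounded on the right half-plane too; by Liouville it is constant, hence
zero. Thus `∫₀ᵀ m = Φ 0 = 0` for every `T > 0`, and differentiating in `T` gives `m = 0`.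
-/

open MeasureTheory Filter Topology Set intervalIntegral

section InnerProduct

variable {𝕜 E : Type*} [RCLike 𝕜] [NormedAddCommGroup E] [InnerProductSpace 𝕜 E]

theorem mul_norm_le_norm_add_smul_of_re_inner_nonneg {x y : E} (h : 0 ≤ RCLike.re (inner 𝕜 y x))
    (r : ℝ) : r * ‖x‖ ≤ ‖y + (r : 𝕜) • x‖ := by
  rcases (norm_nonneg x).eq_or_lt with hx | hx
  · simp [← hx]
  have hre : r * ‖x‖ ^ 2 ≤ RCLike.re (inner 𝕜 (y + (r : 𝕜) • x) x) := by
    rw [inner_add_left, inner_smul_left, inner_self_eq_norm_sq_to_K, RCLike.conj_ofReal,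
      map_add, ← RCLike.ofReal_pow, ← RCLike.ofReal_mul, RCLike.ofReal_re]
    linarith
  have := hre.trans ((RCLike.re_le_norm _).trans (norm_inner_le_norm (𝕜 := 𝕜) _ _))
  rw [sq, ← mul_assoc] at this
  exact le_of_mul_le_mul_right this hx

theorem Dense.norm_le_of_norm_inner_le {S : Set E} (hS : Dense S) {v : E} {B : ℝ} (hB : 0 ≤ B)
    (h : ∀ ζ ∈ S, ‖inner 𝕜 ζ v‖ ≤ B * ‖ζ‖) : ‖v‖ ≤ B := by
  have hv : ‖inner 𝕜 v v‖ ≤ B * ‖v‖ :=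
    hS.induction (P := fun ζ => ‖inner 𝕜 ζ v‖ ≤ B * ‖ζ‖) h
      (isClosed_le (by fun_prop) (by fun_prop)) v
  rcases (norm_nonneg v).eq_or_lt with h0 | h0
  · rwa [← h0]
  rw [inner_self_eq_norm_sq_to_K, norm_pow, RCLike.norm_ofReal, abs_norm, sq] at hv
  exact le_of_mul_le_mul_right hv h0

end InnerProduct

theorem integral_cexp_mul_sub_mul_primitive {v : ℝ → ℂ} (hv : Continuous v) (z : ℂ) (T : ℝ) :
    ∫ s in 0..T, Complex.exp (z * (T - s)) * (v s - z * ∫ r in 0..s, v r) = ∫ s in 0..T, v s := by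
  set V : ℝ → ℂ := fun t => ∫ r in 0..t, v r
  have hderiv : ∀ s : ℝ, HasDerivAt (fun s : ℝ => Complex.exp (z * (T - s)) * V s)
      (Complex.exp (z * (T - s)) * (v s - z * V s)) s := by
    intro s
    have he : HasDerivAt (fun s : ℝ => Complex.exp (z * (T - s)))
        (Complex.exp (z * (T - s)) * -z) s := by
      have := (((hasDerivAt_id (s : ℂ)).const_sub (T : ℂ)).const_mul z).cexp.comp_ofReal
      simpa using this
    exact (he.mul (hv.integral_hasStrictDerivAt 0 s).hasDerivAt).congr_deriv (by ring)
  rw [integral_eq_sub_of_hasDerivAt (fun s _ => hderiv s)]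
  · simp [V]
  · exact Continuous.intervalIntegrable (by fun_prop) _ _

theorem eq_zero_of_forall_pos_intervalIntegral_eq_zero {E : Type*} [NormedAddCommGroup E]
    [NormedSpace ℝ E] [CompleteSpace E] {m : ℝ → E} (hm : Continuous m)
    (h : ∀ t, 0 < t → ∫ s in 0..t, m s = 0) {t : ℝ} (ht : 0 ≤ t) : m t = 0 := by
  have hpos : Ioi (0 : ℝ) ⊆ {t | m t = 0} := fun t ht =>
    (hm.integral_hasStrictDerivAt 0 t).hasDerivAt.unique <|
      (hasDerivAt_const t (0 : E)).congr_of_eventuallyEq <|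
        (eventually_gt_nhds ht).mono fun s hs => h s hs
  exact (isClosed_eq hm continuous_const).closure_subset_iff.2 hpos (closure_Ioi (0 : ℝ) ▸ ht)

theorem Complex.eq_zero_of_norm_le_exp_of_tendsto_atTop {E : Type*} [NormedAddCommGroup E]
    [NormedSpace ℂ E] {f : ℂ → E} (hf : Differentiable ℂ f) {A B : ℝ} (hB : 0 ≤ B)
    (hbound : ∀ z, ‖f z‖ ≤ A * Real.exp (max z.re 0 * B))
    (hlim : Tendsto (fun l : ℝ => f l) atTop (𝓝 0)) : f = 0 := by
  have hA : 0 ≤ A := by simpa using (norm_nonneg _).trans (hbound 0)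
  have hgrowth : f =O[Bornology.cobounded ℂ ⊓ 𝓟 {z | 0 < z.re}]
      fun z => Real.exp (B * ‖z‖ ^ (1 : ℝ)) := by
    refine Asymptotics.IsBigO.of_bound A (Eventually.of_forall fun z => ?_)
    rw [Real.rpow_one, Real.norm_of_nonneg (Real.exp_pos _).le]
    refine (hbound z).trans (mul_le_mul_of_nonneg_left (Real.exp_le_exp.2 ?_) hA)
    rw [mul_comm B]
    exact mul_le_mul_of_nonneg_right (max_le (re_le_norm z) (norm_nonneg z)) hB
  have hbdd : ∀ z, ‖f z‖ ≤ A := by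
    intro z
    rcases le_total 0 z.re with hz | hz
    · exact PhragmenLindelof.right_half_plane_of_bounded_on_real hf.diffContOnCl
        ⟨1, one_lt_two, B, hgrowth⟩ hlim.norm.isBoundedUnder_le
        (fun y => by simpa using hbound (y * I)) hz
    · simpa [max_eq_right hz] using hbound z
  obtain ⟨c, hc⟩ := hf.exists_const_forall_eq_of_bounded
    (isBounded_iff_forall_norm_le.2 ⟨A, by rintro _ ⟨z, rfl⟩; exact hbdd z⟩)
  have hc0 : c = 0 := tendsto_nhds_unique (by simp only [hc]; exact tendsto_const_nhds) hlim
  exact funext fun z => (hc z).trans hc0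

section ExpConvolution

variable {E : Type*} [NormedAddCommGroup E] [NormedSpace ℂ E]

noncomputable def expConvolution (m : ℝ → E) (T : ℝ) (z : ℂ) : E :=
  ∫ s in 0..T, Complex.exp (z * (T - s)) • m s

theorem expConvolution_zero (m : ℝ → E) (T : ℝ) :
    expConvolution m T 0 = ∫ s in 0..T, m s := by
  simp [expConvolution]

theorem norm_cexp_mul_sub_le (z : ℂ) {T s : ℝ} (hs : s ∈ Icc (0 : ℝ) T) :
    ‖Complex.exp (z * (T - s))‖ ≤ Real.exp (max z.re 0 * T) := by
  rw [Complex.norm_exp, Real.exp_le_exp, ← Complex.ofReal_sub, Complex.re_mul_ofReal]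
  have hsT : 0 ≤ T - s := sub_nonneg.2 hs.2
  calc z.re * (T - s) ≤ max z.re 0 * (T - s) := by gcongr; exact le_max_left _ _
    _ ≤ max z.re 0 * T := mul_le_mul_of_nonneg_left (by linarith [hs.1]) (le_max_right z.re 0)

variable {m : ℝ → E} {T : ℝ}

theorem norm_expConvolution_le (hT : 0 ≤ T) {M : ℝ} (hM : ∀ s ∈ Icc (0 : ℝ) T, ‖m s‖ ≤ M) (z : ℂ) :
    ‖expConvolution m T z‖ ≤ M * T * Real.exp (max z.re 0 * T) := by
  have hbound : ∀ s ∈ uIoc (0 : ℝ) T,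
      ‖Complex.exp (z * (T - s)) • m s‖ ≤ Real.exp (max z.re 0 * T) * M := by
    intro s hs
    have hs : s ∈ Icc (0 : ℝ) T := Ioc_subset_Icc_self (uIoc_of_le hT ▸ hs)
    rw [norm_smul]
    exact mul_le_mul (norm_cexp_mul_sub_le z hs) (hM s hs) (norm_nonneg _) (Real.exp_pos _).le
  calc ‖expConvolution m T z‖ ≤ Real.exp (max z.re 0 * T) * M * |T - 0| :=
        norm_integral_le_of_norm_le_const hbound
    _ = M * T * Real.exp (max z.re 0 * T) := by rw [sub_zero, abs_of_nonneg hT]; ring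

theorem differentiable_expConvolution [CompleteSpace E] (hm : Continuous m) (hT : 0 ≤ T) :
    Differentiable ℂ (expConvolution m T) := by
  intro z₀
  obtain ⟨M, hM⟩ := (isCompact_Icc (a := (0 : ℝ)) (b := T)).exists_bound_of_continuousOn
    hm.continuousOn
  have hF' : ∀ s ∈ uIoc (0 : ℝ) T, ∀ z ∈ Metric.ball z₀ 1,
      ‖((T - s : ℂ) * Complex.exp (z * (T - s))) • m s‖ ≤ T * Real.exp ((‖z₀‖ + 1) * T) * M := by
    intro s hs z hz
    have hs : s ∈ Icc (0 : ℝ) T := Ioc_subset_Icc_self (uIoc_of_le hT ▸ hs)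
    have hz : max z.re 0 ≤ ‖z₀‖ + 1 := max_le ((Complex.re_le_norm z).trans
      (by linarith [norm_le_norm_add_norm_sub' z z₀, mem_ball_iff_norm.1 hz])) (by positivity)
    have hexp : ‖Complex.exp (z * (T - s))‖ ≤ Real.exp ((‖z₀‖ + 1) * T) :=
      (norm_cexp_mul_sub_le z hs).trans (Real.exp_le_exp.2 (mul_le_mul_of_nonneg_right hz hT))
    have hTs : ‖(T - s : ℂ)‖ ≤ T := by
      rw [← Complex.ofReal_sub, Complex.norm_real, Real.norm_of_nonneg (by linarith [hs.2])]
      linarith [hs.1]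
    rw [norm_smul, norm_mul]
    gcongr
    exact hM s hs
  refine (hasDerivAt_integral_of_dominated_loc_of_deriv_le (Metric.ball_mem_nhds z₀ one_pos)
    (Eventually.of_forall fun z => (by fun_prop : Continuous fun s : ℝ =>
      Complex.exp (z * (T - s)) • m s).aestronglyMeasurable)
    (Continuous.intervalIntegrable (by fun_prop) _ _)
    (by fun_prop : Continuous fun s : ℝ =>
      ((T - s : ℂ) * Complex.exp (z₀ * (T - s))) • m s).aestronglyMeasurable
    (Eventually.of_forall hF') intervalIntegrable_const
    (Eventually.of_forall fun s _ z _ => ?_)).2.differentiableAt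
  exact ((((hasDerivAt_id z).mul_const _).cexp).smul_const (m s)).congr_deriv (by simp [mul_comm])

theorem integral_eq_zero_of_tendsto_expConvolution [CompleteSpace E] (hm : Continuous m)
    (hT : 0 ≤ T) (hlim : Tendsto (fun l : ℝ => expConvolution m T l) atTop (𝓝 0)) :
    ∫ s in 0..T, m s = 0 := by
  obtain ⟨M, hM⟩ := (isCompact_Icc (a := (0 : ℝ)) (b := T)).exists_bound_of_continuousOn
    hm.continuousOn
  rw [← expConvolution_zero, Complex.eq_zero_of_norm_le_exp_of_tendsto_atTop
    (differentiable_expConvolution hm hT) hT (norm_expConvolution_le hT hM) hlim, Pi.zero_apply]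

end ExpConvolution

section WeakSolution

variable {𝔥 : Type*} [NormedAddCommGroup 𝔥] [InnerProductSpace ℂ 𝔥] [CompleteSpace 𝔥]
  {m : ℝ → 𝔥}

theorem inner_expConvolution (hm : Continuous m) (ζ : 𝔥) (T : ℝ) (z : ℂ) :
    inner ℂ ζ (expConvolution m T z) =
      ∫ s in 0..T, Complex.exp (z * (T - s)) * inner ℂ ζ (m s) := by
  rw [expConvolution, ← innerSL_apply_apply (𝕜 := ℂ),
    ← ContinuousLinearMap.intervalIntegral_comp_comm _
      (Continuous.intervalIntegrable (by fun_prop) _ _)]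
  simp only [innerSL_apply_apply, inner_smul_right]

theorem inner_add_smul_expConvolution (hm : Continuous m) {φ ψ : 𝔥}
    (hweak : ∀ t : ℝ, 0 ≤ t → inner ℂ φ (m t) = -∫ s in Icc (0 : ℝ) t, inner ℂ ψ (m s))
    {T : ℝ} (hT : 0 ≤ T) (l : ℝ) :
    inner ℂ (ψ + (l : ℂ) • φ) (expConvolution m T l) = -inner ℂ φ (m T) := by
  have hv : Continuous fun s => inner ℂ ψ (m s) := by fun_prop
  have hweak' : ∀ t : ℝ, 0 ≤ t → inner ℂ φ (m t) = -∫ s in 0..t, inner ℂ ψ (m s) := fun t ht => by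
    rw [hweak t ht, integral_of_le ht, integral_Icc_eq_integral_Ioc]
  rw [inner_expConvolution hm, hweak' T hT, neg_neg,
    ← integral_cexp_mul_sub_mul_primitive hv (l : ℂ) T]
  refine intervalIntegral.integral_congr fun s hs => ?_
  rw [uIcc_of_le hT] at hs
  simp only [inner_add_left, inner_smul_left, Complex.conj_ofReal, hweak' s hs.1]
  ring

theorem norm_expConvolution_le_of_accretive (K : 𝔥 → 𝔥) (D : Set 𝔥) (c : ℝ)
    (hacc : ∀ x ∈ D, 0 ≤ (inner ℂ (K x + ((c / 2 : ℝ) : ℂ) • x) x : ℂ).re)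
    (hran : ∀ l : ℝ, c / 2 < l → Dense ((fun x => K x + (l : ℂ) • x) '' D))
    (hm : Continuous m)
    (hweak : ∀ φ ∈ D, ∀ t : ℝ, 0 ≤ t →
      inner ℂ φ (m t) = -∫ s in Icc (0 : ℝ) t, inner ℂ (K φ) (m s))
    {T : ℝ} (hT : 0 ≤ T) {l : ℝ} (hl : c / 2 < l) :
    ‖expConvolution m T l‖ ≤ ‖m T‖ / (l - c / 2) := by
  have hlc : 0 < l - c / 2 := sub_pos.2 hl
  refine (hran l hl).norm_le_of_norm_inner_le (𝕜 := ℂ) (by positivity) ?_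
  rintro _ ⟨φ, hφ, rfl⟩
  have hφ_le : (l - c / 2) * ‖φ‖ ≤ ‖K φ + (l : ℂ) • φ‖ := by
    have := mul_norm_le_norm_add_smul_of_re_inner_nonneg (𝕜 := ℂ) (hacc φ hφ) (l - c / 2)
    refine this.trans_eq (congrArg norm ?_)
    rw [add_assoc, ← add_smul]
    congr 2
    simp
  rw [inner_add_smul_expConvolution hm (hweak φ hφ) hT, norm_neg, div_mul_eq_mul_div,
    le_div_iff₀ hlc]
  calc ‖inner ℂ φ (m T)‖ * (l - c / 2) ≤ ‖φ‖ * ‖m T‖ * (l - c / 2) := by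
        gcongr; exact norm_inner_le_norm φ (m T)
    _ = ‖m T‖ * ((l - c / 2) * ‖φ‖) := by ring
    _ ≤ ‖m T‖ * ‖K φ + (l : ℂ) • φ‖ := by gcongr

end WeakSolution

theorem laplace_uniqueness_step_general
    {𝔥 : Type*} [NormedAddCommGroup 𝔥] [InnerProductSpace ℂ 𝔥] [CompleteSpace 𝔥]
    (K : 𝔥 → 𝔥) (D : Set 𝔥) (c : ℝ)
    (hacc : ∀ x ∈ D, 0 ≤ (inner ℂ (K x + ((c / 2 : ℝ) : ℂ) • x) x : ℂ).re)
    (hran : ∀ l : ℝ, c / 2 < l → Dense ((fun x => K x + (l : ℂ) • x) '' D))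
    (m : ℝ → 𝔥) (hm : Continuous m)
    (heq : ∀ φ ∈ D, ∀ t : ℝ, 0 ≤ t →
      (inner ℂ φ (m t) : ℂ) = -∫ s in Set.Icc (0 : ℝ) t, (inner ℂ (K φ) (m s) : ℂ)) :
    ∀ t : ℝ, 0 ≤ t → m t = 0 := by
  refine fun t ht => eq_zero_of_forall_pos_intervalIntegral_eq_zero hm (fun T hT => ?_) ht
  have hdecay : ∀ᶠ l : ℝ in atTop, ‖expConvolution m T l‖ ≤ ‖m T‖ / (l - c / 2) :=
    (eventually_gt_atTop (c / 2)).mono fun l hl =>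
      norm_expConvolution_le_of_accretive K D c hacc hran hm heq hT.le hl
  have hbound_lim : Tendsto (fun l : ℝ => ‖m T‖ / (l - c / 2)) atTop (𝓝 0) :=
    tendsto_const_nhds.div_atTop (tendsto_atTop_add_const_right _ (-(c / 2)) tendsto_id)
  exact integral_eq_zero_of_tendsto_expConvolution hm hT.le (squeeze_zero_norm' hdecay hbound_lim)

/-- Laplace-transform uniqueness step: if `K⋆` (with dense domain `D`) is such that
`K⋆ + c/2` is accretive and `(K⋆ + λ)D` is dense for `λ > c/2`, and a continuous
`m : [0,∞) → 𝔥` satisfies `⟨φ, m(t)⟩ = −∫₀ᵗ ⟨K⋆φ, m(s)⟩ ds` for all `φ ∈ D`,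
then `m ≡ 0`. -/
theorem laplace_uniqueness_step
    {𝔥 : Type*} [NormedAddCommGroup 𝔥] [InnerProductSpace ℂ 𝔥] [CompleteSpace 𝔥]
    (K : 𝔥 → 𝔥) (D : Set 𝔥) (c : ℝ)
    (hdense : Dense D)
    (hacc : ∀ x ∈ D, 0 ≤ (inner ℂ (K x + ((c / 2 : ℝ) : ℂ) • x) x : ℂ).re)
    (hran : ∀ l : ℝ, c / 2 < l → Dense ((fun x => K x + (l : ℂ) • x) '' D))
    (m : ℝ → 𝔥) (hm : Continuous m)
    (heq : ∀ φ ∈ D, ∀ t : ℝ, 0 ≤ t →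
      (inner ℂ φ (m t) : ℂ) = -∫ s in Set.Icc (0 : ℝ) t, (inner ℂ (K φ) (m s) : ℂ)) :
    ∀ t : ℝ, 0 ≤ t → m t = 0 :=
  laplace_uniqueness_step_general K D c hacc hran m hm heq
end
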